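/- Let G be a group with endomorphism F, surjective Lang map on G, and F-stable subgroup H with F(H)=H. With τ : N_G(H) → Y^F/∼ as above (y ↦ class of xHx⁻¹ where x⁻¹F(x) = y), two elements y, y' ∈ N_G(H) satisfy τ(y) = τ(y') if and only if y' = y₁⁻¹·y·F(y₁) for some y₁ ∈ N_G(H). Hence τ induces a bijection cl'(N_G(H)) → Y^F/∼ between F-twisted conjugacy classes of N_G(H) and G^F-orbits of F-stable conjugates of H. -/

import Mathlib

/-!
Every `g : G` can be written uniquely as `g = x' * y₁⁻¹ * x⁻¹`. For `g` of this form,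
`g (x H x⁻¹) g⁻¹ = x' H x'⁻¹` holds iff `y₁` normalizes `H`, and `F g = g` holds iff
`x'⁻¹ F x' = y₁⁻¹ (x⁻¹ F x) F y₁`. So the elements `g ∈ G^F` carrying `x H x⁻¹` to `x' H x'⁻¹`
correspond exactly to the `y₁ ∈ N_G(H)` that twist `y` into `y'`.
-/

/-- The conjugate subgroup `g K g⁻¹`. -/
def conjSub {G : Type*} [Group G] (g : G) (K : Subgroup G) : Subgroup G :=
  Subgroup.map (MulAut.conj g).toMonoidHom K

section
variable {G : Type*} [Group G]

lemma conjSub_one (K : Subgroup G) : conjSub 1 K = K := by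
  ext; simp [conjSub]

lemma conjSub_conjSub (a b : G) (K : Subgroup G) :
    conjSub a (conjSub b K) = conjSub (a * b) K := by
  rw [conjSub, conjSub, conjSub, Subgroup.map_map, map_mul]
  rfl

lemma conjSub_inv_conjSub (g : G) (K : Subgroup G) : conjSub g⁻¹ (conjSub g K) = K := by
  rw [conjSub_conjSub, inv_mul_cancel, conjSub_one]

lemma conjSub_conjSub_inv (g : G) (K : Subgroup G) : conjSub g (conjSub g⁻¹ K) = K := by
  rw [conjSub_conjSub, mul_inv_cancel, conjSub_one]

lemma conjSub_eq_self_iff {g : G} {H : Subgroup G} :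
    conjSub g H = H ↔ g ∈ Subgroup.normalizer (H : Set G) :=
  Subgroup.mem_normalizer_iff_map_conj_eq.symm

lemma conjSub_eq_conjSub_iff {a b : G} {H : Subgroup G} :
    conjSub a H = conjSub b H ↔ b⁻¹ * a ∈ Subgroup.normalizer (H : Set G) := by
  rw [← conjSub_eq_self_iff, ← conjSub_conjSub]
  constructor
  · intro h
    rw [h, conjSub_inv_conjSub]
  · intro h
    rw [← conjSub_conjSub_inv b (conjSub a H), h]

lemma conjSub_eq_conjSub_mul_inv_mul_inv_iff {x x' y₁ : G} {H : Subgroup G} :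
    conjSub x' H = conjSub (x' * y₁⁻¹ * x⁻¹) (conjSub x H) ↔
      y₁ ∈ Subgroup.normalizer (H : Set G) := by
  rw [conjSub_conjSub, inv_mul_cancel_right, conjSub_eq_conjSub_iff, mul_inv_rev, inv_inv,
    inv_mul_cancel_right]

lemma map_mul_inv_mul_inv_eq_self_iff (F : G →* G) (x x' y₁ : G) :
    F (x' * y₁⁻¹ * x⁻¹) = x' * y₁⁻¹ * x⁻¹ ↔ x'⁻¹ * F x' = y₁⁻¹ * (x⁻¹ * F x) * F y₁ := by
  rw [map_mul, map_mul, map_inv, map_inv, mul_inv_eq_iff_eq_mul, mul_inv_eq_iff_eq_mul,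
    inv_mul_eq_iff_eq_mul]
  simp only [mul_assoc]

end

theorem tau_fibers_are_twisted_classes_general {G : Type*} [Group G] (F : G →* G)
    (H : Subgroup G) (y y' x x' : G) (hx : x⁻¹ * F x = y) (hx' : x'⁻¹ * F x' = y') :
    (∃ g : G, F g = g ∧ conjSub x' H = conjSub g (conjSub x H)) ↔
      ∃ y₁ ∈ Subgroup.normalizer (H : Set G), y' = y₁⁻¹ * y * F y₁ := by
  subst hx hx'
  constructor
  · rintro ⟨g, hg, hconj⟩
    obtain ⟨y₁, rfl⟩ : ∃ y₁, g = x' * y₁⁻¹ * x⁻¹ := ⟨x⁻¹ * g⁻¹ * x', by group⟩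
    exact ⟨y₁, conjSub_eq_conjSub_mul_inv_mul_inv_iff.1 hconj,
      (map_mul_inv_mul_inv_eq_self_iff F x x' y₁).1 hg⟩
  · rintro ⟨y₁, hy₁, hy'⟩
    exact ⟨x' * y₁⁻¹ * x⁻¹, (map_mul_inv_mul_inv_eq_self_iff F x x' y₁).2 hy',
      conjSub_eq_conjSub_mul_inv_mul_inv_iff.2 hy₁⟩

/-- paper 1.5(a): `τ(y) = τ(y')` iff `y` and `y'` are `F`-twisted
conjugate in `N_G(H)`; hence `τ` induces a bijection `cl'(N_G(H)) → Y^F/∼`. -/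
theorem tau_fibers_are_twisted_classes {G : Type*} [Group G] (F : G →* G)
    (hLang : Function.Surjective fun y : G => y⁻¹ * F y)
    (H : Subgroup G) (hFH : Subgroup.map F H = H)
    (y y' x x' : G) (hy : y ∈ Subgroup.normalizer (H : Set G)) (hy' : y' ∈ Subgroup.normalizer (H : Set G))
    (hx : x⁻¹ * F x = y) (hx' : x'⁻¹ * F x' = y') :
    (∃ g : G, F g = g ∧ conjSub x' H = conjSub g (conjSub x H)) ↔
      ∃ y₁ ∈ Subgroup.normalizer (H : Set G), y' = y₁⁻¹ * y * F y₁ :=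
  tau_fibers_are_twisted_classes_general F H y y' x x' hx hx'
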